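/- On ℝ⁴ with coordinates (x, y, y₁, y₂), let Y₁ = ∂/∂y₂ and Y₂ = ∂/∂x + y₁ ∂/∂y + y₂ ∂/∂y₁ span the contact (Cartan) distribution of J²(ℝ,ℝ), and let T₁ = x ∂/∂y + ∂/∂y₁, T₂ = x ∂/∂x − y ∂/∂y − 2y₁ ∂/∂y₁ − 3y₂ ∂/∂y₂, T₃ = y ∂/∂x − y₁² ∂/∂y₁ − 3y₁y₂ ∂/∂y₂, T₄ = ∂/∂x, T₅ = ∂/∂y. Then each Tᵢ (i = 1,…,5) is an infinitesimal symmetry of the contact distribution; explicitly: [T₁,Y₁] = 0, [T₁,Y₂] = 0, [T₂,Y₁] = 3Y₁, [T₂,Y₂] = −Y₂, [T₃,Y₁] = 3y₁Y₁, [T₃,Y₂] = 3y₂²Y₁ − y₁Y₂, [T₄,Y₁] = 0, [T₄,Y₂] = 0, [T₅,Y₁] = 0, [T₅,Y₂] = 0. -/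
import Mathlib


/-- Lie bracket of vector fields on ℝ⁴, `[V,W](q) = DW(q)(V(q)) − DV(q)(W(q))`. -/
noncomputable def lieBracket (V W : (Fin 4 → ℝ) → (Fin 4 → ℝ)) :
    (Fin 4 → ℝ) → (Fin 4 → ℝ) :=
  fun q => fderiv ℝ W q (V q) - fderiv ℝ V q (W q)

/-- `Y₁ = ∂/∂y₂` on `J²(ℝ,ℝ) = ℝ⁴`, coordinates `(x, y, y₁, y₂) = (q 0, q 1, q 2, q 3)`. -/
noncomputable def Y₁ : (Fin 4 → ℝ) → (Fin 4 → ℝ) := fun _ => ![0, 0, 0, 1]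

/-- `Y₂ = ∂/∂x + y₁ ∂/∂y + y₂ ∂/∂y₁`, the second generator of the contact
distribution of `J²(ℝ,ℝ)`. -/
noncomputable def Y₂ : (Fin 4 → ℝ) → (Fin 4 → ℝ) := fun q => ![1, q 2, q 3, 0]

/-- `T₁ = x ∂/∂y + ∂/∂y₁` on ℝ⁴, coordinates `(x, y, y₁, y₂) = (q 0, q 1, q 2, q 3)`. -/
noncomputable def T₁ : (Fin 4 → ℝ) → (Fin 4 → ℝ) := fun q => ![0, q 0, 1, 0]

/-- `T₂ = x ∂/∂x − y ∂/∂y − 2y₁ ∂/∂y₁ − 3y₂ ∂/∂y₂`. -/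
noncomputable def T₂ : (Fin 4 → ℝ) → (Fin 4 → ℝ) :=
  fun q => ![q 0, -q 1, -2 * q 2, -3 * q 3]

/-- `T₃ = y ∂/∂x − y₁² ∂/∂y₁ − 3y₁y₂ ∂/∂y₂`. -/
noncomputable def T₃ : (Fin 4 → ℝ) → (Fin 4 → ℝ) :=
  fun q => ![q 1, 0, -(q 2) ^ 2, -3 * q 2 * q 3]

/-- `T₄ = ∂/∂x`. -/
noncomputable def T₄ : (Fin 4 → ℝ) → (Fin 4 → ℝ) := fun _ => ![1, 0, 0, 0]

/-- `T₅ = ∂/∂y`. -/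
noncomputable def T₅ : (Fin 4 → ℝ) → (Fin 4 → ℝ) := fun _ => ![0, 1, 0, 0]

open ContinuousLinearMap in
lemma fderiv_Y₂_apply (q v : Fin 4 → ℝ) :
    fderiv ℝ Y₂ q v = ![0, v 2, v 3, 0] := by
  have h : HasFDerivAt Y₂
      ((pi ![0, proj 2, proj 3, 0] : (Fin 4 → ℝ) →L[ℝ] (Fin 4 → ℝ))) q := by
    refine hasFDerivAt_pi'.2 fun i => ?_
    fin_cases i <;>
      simp only [Y₂, Matrix.cons_val_zero, Matrix.cons_val_one, Matrix.head_cons,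
        Matrix.cons_val_two, Matrix.tail_cons, Matrix.cons_val_three, proj_pi, Fin.isValue]
    · exact hasFDerivAt_const _ _
    · exact hasFDerivAt_apply 2 q
    · exact hasFDerivAt_apply 3 q
    · exact hasFDerivAt_const _ _
  rw [h.fderiv]
  funext i
  fin_cases i <;> simp

open ContinuousLinearMap in
lemma fderiv_T₁_apply (q v : Fin 4 → ℝ) :
    fderiv ℝ T₁ q v = ![0, v 0, 0, 0] := by
  have h : HasFDerivAt T₁
      ((pi ![0, proj 0, 0, 0] : (Fin 4 → ℝ) →L[ℝ] (Fin 4 → ℝ))) q := by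
    refine hasFDerivAt_pi'.2 fun i => ?_
    fin_cases i <;>
      simp only [T₁, Matrix.cons_val_zero, Matrix.cons_val_one, Matrix.head_cons,
        Matrix.cons_val_two, Matrix.tail_cons, Matrix.cons_val_three, proj_pi, Fin.isValue]
    · exact hasFDerivAt_const _ _
    · exact hasFDerivAt_apply 0 q
    · exact hasFDerivAt_const _ _
    · exact hasFDerivAt_const _ _
  rw [h.fderiv]
  funext i
  fin_cases i <;> simp

open ContinuousLinearMap in
lemma fderiv_T₂_apply (q v : Fin 4 → ℝ) :
    fderiv ℝ T₂ q v = ![v 0, -v 1, -2 * v 2, -3 * v 3] := by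
  have h : HasFDerivAt T₂
      ((pi ![proj 0, -proj 1, (-2 : ℝ) • proj 2, (-3 : ℝ) • proj 3] :
        (Fin 4 → ℝ) →L[ℝ] (Fin 4 → ℝ))) q := by
    refine hasFDerivAt_pi'.2 fun i => ?_
    fin_cases i <;>
      simp only [T₂, Matrix.cons_val_zero, Matrix.cons_val_one, Matrix.head_cons,
        Matrix.cons_val_two, Matrix.tail_cons, Matrix.cons_val_three, proj_pi, Fin.isValue]
    · exact hasFDerivAt_apply 0 q
    · exact (hasFDerivAt_apply 1 q).neg
    · exact ((hasFDerivAt_apply 2 q).const_mul (-2)).congr_fderiv (by ext v; simp)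
    · exact ((hasFDerivAt_apply 3 q).const_mul (-3)).congr_fderiv (by ext v; simp)
  rw [h.fderiv]
  funext i
  fin_cases i <;> simp

open ContinuousLinearMap in
lemma fderiv_T₃_apply (q v : Fin 4 → ℝ) :
    fderiv ℝ T₃ q v = ![v 1, 0, -(2 * q 2 * v 2), -(3 * q 3 * v 2 + 3 * q 2 * v 3)] := by
  have h : HasFDerivAt T₃
      ((pi ![proj 1, 0, -((2 * q 2) • proj 2),
          -((3 * q 3) • proj 2 + (3 * q 2) • proj 3)] :
        (Fin 4 → ℝ) →L[ℝ] (Fin 4 → ℝ))) q := by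
    refine hasFDerivAt_pi'.2 fun i => ?_
    fin_cases i <;>
      simp only [T₃, Matrix.cons_val_zero, Matrix.cons_val_one, Matrix.head_cons,
        Matrix.cons_val_two, Matrix.tail_cons, Matrix.cons_val_three, proj_pi, Fin.isValue]
    · exact hasFDerivAt_apply 1 q
    · exact hasFDerivAt_const _ _
    · simp only [pow_two]
      exact ((hasFDerivAt_apply 2 q).mul (hasFDerivAt_apply 2 q)).neg.congr_fderiv
        (by ext v; simp; ring)
    · exact (((hasFDerivAt_apply 2 q).const_mul (-3)).mul
        (hasFDerivAt_apply 3 q)).congr_fderiv (by ext v; simp; ring)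
  rw [h.fderiv]
  funext i
  fin_cases i <;> simp

lemma fderiv_Y₁ (q : Fin 4 → ℝ) : fderiv ℝ Y₁ q = 0 := fderiv_const_apply _
lemma fderiv_T₄ (q : Fin 4 → ℝ) : fderiv ℝ T₄ q = 0 := fderiv_const_apply _
lemma fderiv_T₅ (q : Fin 4 → ℝ) : fderiv ℝ T₅ q = 0 := fderiv_const_apply _

/-- Each `Tᵢ` is an infinitesimal symmetry of the contact distribution of `J²(ℝ,ℝ)`,
with the explicit bracket relations stated pointwise. -/
theorem projected_fields_contact_symmetries :
    lieBracket T₁ Y₁ = 0 ∧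
    lieBracket T₁ Y₂ = 0 ∧
    (∀ q : Fin 4 → ℝ, lieBracket T₂ Y₁ q = (3 : ℝ) • Y₁ q) ∧
    (∀ q : Fin 4 → ℝ, lieBracket T₂ Y₂ q = -Y₂ q) ∧
    (∀ q : Fin 4 → ℝ, lieBracket T₃ Y₁ q = (3 * q 2) • Y₁ q) ∧
    (∀ q : Fin 4 → ℝ, lieBracket T₃ Y₂ q = (3 * (q 3) ^ 2) • Y₁ q - (q 2) • Y₂ q) ∧
    lieBracket T₄ Y₁ = 0 ∧
    lieBracket T₄ Y₂ = 0 ∧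
    lieBracket T₅ Y₁ = 0 ∧
    lieBracket T₅ Y₂ = 0 := by
  refine ⟨?_, ?_, ?_, ?_, ?_, ?_, ?_, ?_, ?_, ?_⟩ <;>
    first
      | (funext q; funext i;
         simp only [lieBracket, fderiv_Y₁, fderiv_T₄, fderiv_T₅,
           fderiv_Y₂_apply, fderiv_T₁_apply, fderiv_T₂_apply, fderiv_T₃_apply,
           Y₁, Y₂, T₁, T₂, T₃, T₄, T₅, Pi.sub_apply, Pi.zero_apply,
           ContinuousLinearMap.zero_apply] <;>
         fin_cases i <;> simp <;> ring)
      | (intro q; funext i;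
         simp only [lieBracket, fderiv_Y₁, fderiv_T₄, fderiv_T₅,
           fderiv_Y₂_apply, fderiv_T₁_apply, fderiv_T₂_apply, fderiv_T₃_apply,
           Y₁, Y₂, T₁, T₂, T₃, T₄, T₅, Pi.sub_apply, Pi.zero_apply, Pi.smul_apply,
           Pi.neg_apply, smul_eq_mul, ContinuousLinearMap.zero_apply] <;>
         fin_cases i <;> simp <;> ring)
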